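/- Detailed fluctuation relation (classical case): with forward probability P^F[ξ], backward probability P^B[ξ] (defined by running the reversed permutations from the final system pmf p' and product reference environment ∏_j r'_j, where r'_j is the final marginal of environment site j), and local marginals P^F_j, P^B_j obtained by summing over all variables except those of the j-th system-environment pair, one has P^F[ξ] e^{-Δι_cl(ξ)} / ∏_j P^F_j[ξ_j] = P^B[ξ] / ∏_j P^B_j[ξ_j], for every trajectory ξ with P^F[ξ] > 0. -/

import Mathlib

/-! On a trajectory with `P^F[ξ] > 0` the deterministic dynamics forces
`π_j (s_j, n_j) = (s'_j, n'_j)` for every `j`. Since each `π_j` is a bijection acting on the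
`j`-th pair only, summing out all other variables collapses the deterministic constraint to this
single local one, so `P^F_j[ξ_j] = p_j(s_j) r_j(n_j)` and `P^B_j[ξ_j] = p'_j(s'_j) r'_j(n'_j)`
(the product environments have marginals `r_j`, `r'_j`), while `P^F[ξ] = p(s) ∏ r_j(n_j)` and
`P^B[ξ] = p'(s') ∏ r'_j(n'_j)`. The relation is then the identity
`e^{-Δι_cl} = p'(s') ∏ p_j(s_j) / (p(s) ∏ p'_j(s'_j))`. -/

/-- Marginal of a joint pmf on a finite product space at site `j`. -/
noncomputable def marg {N : ℕ} {X : Fin N → Type*}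
    [∀ j, Fintype (X j)] [∀ j, DecidableEq (X j)]
    (p : (∀ j, X j) → ℝ) (j : Fin N) (a : X j) : ℝ :=
  ∑ x : ∀ i, X i, if x j = a then p x else 0

section Setup

variable {N : ℕ} {S E : Fin N → Type*}
  [∀ j, Fintype (S j)] [∀ j, DecidableEq (S j)]
  [∀ j, Fintype (E j)] [∀ j, DecidableEq (E j)]

/-- Forward path probability P^F[s,n,s',n']: initial weight p(s)∏_j r_j(n_j), with the
deterministic local permutation dynamics π_j on each system-environment pair. -/
noncomputable def PF (p : (∀ j, S j) → ℝ) (r : ∀ j, E j → ℝ)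
    (π : ∀ j, (S j × E j) ≃ (S j × E j))
    (s : ∀ j, S j) (n : ∀ j, E j) (s' : ∀ j, S j) (n' : ∀ j, E j) : ℝ :=
  if ∀ j, π j (s j, n j) = (s' j, n' j) then p s * ∏ j, r j (n j) else 0

/-- Final system pmf p'. -/
noncomputable def finalSys (p : (∀ j, S j) → ℝ) (r : ∀ j, E j → ℝ)
    (π : ∀ j, (S j × E j) ≃ (S j × E j)) (s' : ∀ j, S j) : ℝ :=
  ∑ s : ∀ j, S j, ∑ n : ∀ j, E j,
    if ∀ j, (π j (s j, n j)).1 = s' j then p s * ∏ j, r j (n j) else 0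

/-- Final marginal pmf r'_j of the j-th environment site. -/
noncomputable def finalEnv (p : (∀ j, S j) → ℝ) (r : ∀ j, E j → ℝ)
    (π : ∀ j, (S j × E j) ≃ (S j × E j)) (j : Fin N) (m : E j) : ℝ :=
  ∑ s : ∀ j, S j, ∑ n : ∀ j, E j,
    if (π j (s j, n j)).2 = m then p s * ∏ j, r j (n j) else 0

/-- Backward path probability P^B[s,n,s',n']: the reversed permutations applied to the
final system pmf p' and the product reference environment ∏_j r'_j. -/
noncomputable def PB (p : (∀ j, S j) → ℝ) (r : ∀ j, E j → ℝ)
    (π : ∀ j, (S j × E j) ≃ (S j × E j))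
    (s : ∀ j, S j) (n : ∀ j, E j) (s' : ∀ j, S j) (n' : ∀ j, E j) : ℝ :=
  if ∀ j, (π j).symm (s' j, n' j) = (s j, n j) then
    finalSys p r π s' * ∏ j, finalEnv p r π j (n' j)
  else 0

/-- Local marginal P^F_j of the forward path probability (sum over all variables except
those of the j-th system-environment pair). -/
noncomputable def PFj (p : (∀ j, S j) → ℝ) (r : ∀ j, E j → ℝ)
    (π : ∀ j, (S j × E j) ≃ (S j × E j)) (j : Fin N)
    (a : S j) (b : E j) (a' : S j) (b' : E j) : ℝ :=
  ∑ s : ∀ j, S j, ∑ n : ∀ j, E j, ∑ s' : ∀ j, S j, ∑ n' : ∀ j, E j,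
    if s j = a ∧ n j = b ∧ s' j = a' ∧ n' j = b' then PF p r π s n s' n' else 0

/-- Local marginal P^B_j of the backward path probability. -/
noncomputable def PBj (p : (∀ j, S j) → ℝ) (r : ∀ j, E j → ℝ)
    (π : ∀ j, (S j × E j) ≃ (S j × E j)) (j : Fin N)
    (a : S j) (b : E j) (a' : S j) (b' : E j) : ℝ :=
  ∑ s : ∀ j, S j, ∑ n : ∀ j, E j, ∑ s' : ∀ j, S j, ∑ n' : ∀ j, E j,
    if s j = a ∧ n j = b ∧ s' j = a' ∧ n' j = b' then PB p r π s n s' n' else 0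

lemma sum_sum_sum_sum_comm {α β γ δ M : Type*} [Fintype α] [Fintype β] [Fintype γ] [Fintype δ]
    [AddCommMonoid M] (f : α → β → γ → δ → M) :
    ∑ a, ∑ b, ∑ c, ∑ d, f a b c d = ∑ c, ∑ d, ∑ a, ∑ b, f a b c d := by
  calc ∑ a, ∑ b, ∑ c, ∑ d, f a b c d
      = ∑ x : α × β, ∑ y : γ × δ, f x.1 x.2 y.1 y.2 := by simp only [Fintype.sum_prod_type]
    _ = ∑ y : γ × δ, ∑ x : α × β, f x.1 x.2 y.1 y.2 := Finset.sum_comm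
    _ = ∑ c, ∑ d, ∑ a, ∑ b, f a b c d := by simp only [Fintype.sum_prod_type]

lemma sum_sum_ite_pos {α β : Type*} [Fintype α] [Fintype β] {P : α → β → Prop}
    [∀ a b, Decidable (P a b)] {w : α → β → ℝ} (hw : ∀ a b, 0 ≤ w a b) {a : α} {b : β}
    (hP : P a b) (hpos : 0 < w a b) :
    0 < ∑ x, ∑ y, if P x y then w x y else 0 :=
  Finset.sum_pos' (fun x _ => Finset.sum_nonneg fun y _ => ite_nonneg (hw x y) le_rfl)
    ⟨a, Finset.mem_univ a, Finset.sum_pos' (fun y _ => ite_nonneg (hw a y) le_rfl)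
      ⟨b, Finset.mem_univ b, by rwa [if_pos hP]⟩⟩

lemma mul_exp_neg_log_ratio_div_prod {ι : Type*} [Fintype ι] {A A' : ℝ} {M M' R R' : ι → ℝ}
    (hA : 0 < A) (hA' : 0 < A') (hM : ∀ i, 0 < M i) (hM' : ∀ i, 0 < M' i)
    (hR : ∀ i, R i ≠ 0) (hR' : ∀ i, R' i ≠ 0) :
    (A * ∏ i, R i) * Real.exp (-(Real.log A - ∑ i, Real.log (M i)
        - (Real.log A' - ∑ i, Real.log (M' i)))) / ∏ i, M i * R i
      = (A' * ∏ i, R' i) / ∏ i, M' i * R' i := by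
  have hprodM : ∏ i, M i ≠ 0 := Finset.prod_ne_zero_iff.mpr fun i _ => (hM i).ne'
  have hprodM' : ∏ i, M' i ≠ 0 := Finset.prod_ne_zero_iff.mpr fun i _ => (hM' i).ne'
  have hexp : Real.exp (-(Real.log A - ∑ i, Real.log (M i) - (Real.log A' - ∑ i, Real.log (M' i))))
      = A' * (∏ i, M i) / (A * ∏ i, M' i) := by
    simp only [Real.exp_neg, Real.exp_sub, Real.exp_sum, Real.exp_log hA, Real.exp_log hA',
      Real.exp_log (hM _), Real.exp_log (hM' _)]
    field_simp
  have hprodR : ∏ i, R i ≠ 0 := Finset.prod_ne_zero_iff.mpr fun i _ => hR i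
  have hprodR' : ∏ i, R' i ≠ 0 := Finset.prod_ne_zero_iff.mpr fun i _ => hR' i
  rw [hexp, Finset.prod_mul_distrib, Finset.prod_mul_distrib]
  field_simp

lemma marg_pi_prod {X : Fin N → Type*} [∀ j, Fintype (X j)] [∀ j, DecidableEq (X j)]
    (r : ∀ j, X j → ℝ) (hr : ∀ j, ∑ m, r j m = 1) (j : Fin N) (b : X j) :
    marg (fun x : ∀ i, X i => ∏ i, r i (x i)) j b = r j b := by
  have hfilter := Fintype.piFinset_update_singleton_eq_filter_piFinset_eq
    (fun i => (Finset.univ : Finset (X i))) j (Finset.mem_univ b)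
  rw [Fintype.piFinset_univ] at hfilter
  rw [marg, ← Finset.sum_filter, ← hfilter, ← Finset.prod_univ_sum,
    Fintype.prod_eq_single j fun i hi => by simp [Function.update_of_ne hi, hr]]
  simp

lemma marg_pos {X : Fin N → Type*} [∀ j, Fintype (X j)] [∀ j, DecidableEq (X j)]
    {p : (∀ j, X j) → ℝ} (hp : ∀ x, 0 ≤ p x) {x : ∀ j, X j} (hx : 0 < p x) (j : Fin N) :
    0 < marg p j (x j) :=
  Finset.sum_pos' (fun y _ => ite_nonneg (hp y) le_rfl) ⟨x, Finset.mem_univ _, by simpa using hx⟩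

lemma sum_sum_ite_and_mul_eq_marg_mul_marg {X Y : Fin N → Type*}
    [∀ j, Fintype (X j)] [∀ j, DecidableEq (X j)] [∀ j, Fintype (Y j)] [∀ j, DecidableEq (Y j)]
    (p : (∀ j, X j) → ℝ) (q : (∀ j, Y j) → ℝ) (j : Fin N) (a : X j) (b : Y j) :
    ∑ x : ∀ i, X i, ∑ y : ∀ i, Y i, (if x j = a ∧ y j = b then p x * q y else 0)
      = marg p j a * marg q j b := by
  simp only [marg, Finset.sum_mul_sum, ite_and, ite_mul, zero_mul, mul_ite, mul_zero]
  exact Finset.sum_congr rfl fun x _ => Finset.sum_congr rfl fun y _ => by split_ifs <;> rfl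

lemma sum_sum_ite_forall_eq_pair (g : ∀ j, S j × E j) (c : (∀ j, S j) → (∀ j, E j) → ℝ) :
    ∑ s : ∀ j, S j, ∑ n : ∀ j, E j, (if ∀ j, g j = (s j, n j) then c s n else 0)
      = c (fun j => (g j).1) (fun j => (g j).2) := by
  have hiff : ∀ s n, (∀ j, g j = (s j, n j)) ↔ (fun j => (g j).1) = s ∧ (fun j => (g j).2) = n :=
    fun s n => by simp only [Prod.ext_iff, funext_iff, forall_and]
  simp only [hiff, ite_and, Finset.sum_ite_irrel, Finset.sum_ite_eq, Finset.mem_univ, if_true,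
    Finset.sum_const_zero]

lemma sum_local_ite_deterministic (σ : ∀ j, S j × E j → S j × E j)
    (c : (∀ j, S j) → (∀ j, E j) → ℝ) (j : Fin N) (a : S j) (b : E j) (a' : S j) (b' : E j) :
    ∑ s : ∀ j, S j, ∑ n : ∀ j, E j, ∑ s' : ∀ j, S j, ∑ n' : ∀ j, E j,
      (if s j = a ∧ n j = b ∧ s' j = a' ∧ n' j = b' then
        (if ∀ i, σ i (s i, n i) = (s' i, n' i) then c s n else 0) else 0)
      = if σ j (a, b) = (a', b') then
          ∑ s : ∀ j, S j, ∑ n : ∀ j, E j, (if s j = a ∧ n j = b then c s n else 0)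
        else 0 := by
  have hinner : ∀ s n, ∑ s' : ∀ j, S j, ∑ n' : ∀ j, E j,
      (if s j = a ∧ n j = b ∧ s' j = a' ∧ n' j = b' then
        (if ∀ i, σ i (s i, n i) = (s' i, n' i) then c s n else 0) else 0)
      = if s j = a ∧ n j = b ∧ (σ j (s j, n j)).1 = a' ∧ (σ j (s j, n j)).2 = b' then c s n
        else 0 := by
    intro s n
    refine Eq.trans ?_ (sum_sum_ite_forall_eq_pair (fun i => σ i (s i, n i))
      fun s' n' => if s j = a ∧ n j = b ∧ s' j = a' ∧ n' j = b' then c s n else 0)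
    refine Finset.sum_congr rfl fun s' _ => Finset.sum_congr rfl fun n' _ => ?_
    split_ifs <;> rfl
  simp only [hinner]
  split_ifs with hab
  · refine Finset.sum_congr rfl fun s _ => Finset.sum_congr rfl fun n _ => ?_
    by_cases hloc : s j = a ∧ n j = b
    · simp [hloc, hab]
    · rw [if_neg hloc, if_neg fun h => hloc ⟨h.1, h.2.1⟩]
  · refine Finset.sum_eq_zero fun s _ => Finset.sum_eq_zero fun n _ => ?_
    rw [if_neg]
    rintro ⟨rfl, rfl, h⟩
    exact hab (Prod.ext h.1 h.2)

omit [∀ j, Fintype (S j)] [∀ j, Fintype (E j)] in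
lemma forall_apply_eq_of_PF_pos {p : (∀ j, S j) → ℝ} {r : ∀ j, E j → ℝ}
    {π : ∀ j, (S j × E j) ≃ (S j × E j)} {s : ∀ j, S j} {n : ∀ j, E j} {s' : ∀ j, S j}
    {n' : ∀ j, E j} (h : 0 < PF p r π s n s' n') :
    ∀ j, π j (s j, n j) = (s' j, n' j) := by
  by_contra hne
  rw [PF, if_neg hne] at h
  exact h.false

lemma PFj_of_apply_eq (p : (∀ j, S j) → ℝ) (r : ∀ j, E j → ℝ) (hrsum : ∀ j, ∑ n, r j n = 1)
    (π : ∀ j, (S j × E j) ≃ (S j × E j)) {j : Fin N} {a : S j} {b : E j} {a' : S j} {b' : E j}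
    (hπ : π j (a, b) = (a', b')) :
    PFj p r π j a b a' b' = marg p j a * r j b := by
  rw [PFj]
  simp only [PF]
  rw [sum_local_ite_deterministic (fun i => π i), if_pos hπ,
    sum_sum_ite_and_mul_eq_marg_mul_marg, marg_pi_prod r hrsum]

omit [∀ j, DecidableEq (S j)] in
lemma finalEnv_sum_eq_one (p : (∀ j, S j) → ℝ) (r : ∀ j, E j → ℝ)
    (hpsum : ∑ s, p s = 1) (hrsum : ∀ j, ∑ n, r j n = 1)
    (π : ∀ j, (S j × E j) ≃ (S j × E j)) (j : Fin N) :
    ∑ m, finalEnv p r π j m = 1 := by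
  simp only [finalEnv]
  rw [Finset.sum_comm]
  simp only [Finset.sum_comm (γ := E j), Finset.sum_ite_eq, Finset.mem_univ, if_true]
  rw [← Finset.sum_mul_sum, hpsum, ← Fintype.prod_sum]
  simp [hrsum]

lemma PBj_of_apply_eq (p : (∀ j, S j) → ℝ) (r : ∀ j, E j → ℝ)
    (hpsum : ∑ s, p s = 1) (hrsum : ∀ j, ∑ n, r j n = 1)
    (π : ∀ j, (S j × E j) ≃ (S j × E j)) {j : Fin N} {a : S j} {b : E j} {a' : S j} {b' : E j}
    (hπ : π j (a, b) = (a', b')) :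
    PBj p r π j a b a' b' = marg (finalSys p r π) j a' * finalEnv p r π j b' := by
  have hloc : ∀ (s s' : ∀ j, S j) (n n' : ∀ j, E j),
      (s j = a ∧ n j = b ∧ s' j = a' ∧ n' j = b') ↔ (s' j = a' ∧ n' j = b' ∧ s j = a ∧ n j = b) :=
    fun _ _ _ _ => by tauto
  -- after reordering the sums this is the forward computation for `π⁻¹`, weighted at the end
  rw [PBj, sum_sum_sum_sum_comm]
  simp only [PB, hloc]
  rw [sum_local_ite_deterministic (fun i => (π i).symm), if_pos ((π j).symm_apply_eq.mpr hπ.symm),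
    sum_sum_ite_and_mul_eq_marg_mul_marg, marg_pi_prod _ (finalEnv_sum_eq_one p r hpsum hrsum π)]

omit [∀ j, DecidableEq (E j)] in
lemma finalSys_nonneg {p : (∀ j, S j) → ℝ} {r : ∀ j, E j → ℝ} (hp : ∀ s, 0 ≤ p s)
    (hr : ∀ j m, 0 ≤ r j m) (π : ∀ j, (S j × E j) ≃ (S j × E j)) (s' : ∀ j, S j) :
    0 ≤ finalSys p r π s' :=
  Finset.sum_nonneg fun s _ => Finset.sum_nonneg fun n _ =>
    ite_nonneg (mul_nonneg (hp s) (Finset.prod_nonneg fun j _ => hr j (n j))) le_rfl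

lemma finalSys_pos_of_PF_pos {p : (∀ j, S j) → ℝ} {r : ∀ j, E j → ℝ} (hp : ∀ s, 0 ≤ p s)
    (hr : ∀ j m, 0 ≤ r j m) {π : ∀ j, (S j × E j) ≃ (S j × E j)} {s : ∀ j, S j}
    {n : ∀ j, E j} {s' : ∀ j, S j} {n' : ∀ j, E j} (h : 0 < PF p r π s n s' n') :
    0 < finalSys p r π s' := by
  have hfwd := forall_apply_eq_of_PF_pos h
  rw [PF, if_pos hfwd] at h
  exact sum_sum_ite_pos (fun s n => mul_nonneg (hp s) (Finset.prod_nonneg fun j _ => hr j (n j)))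
    (fun j => by rw [hfwd j]) h

lemma finalEnv_pos_of_PF_pos {p : (∀ j, S j) → ℝ} {r : ∀ j, E j → ℝ} (hp : ∀ s, 0 ≤ p s)
    (hr : ∀ j m, 0 ≤ r j m) {π : ∀ j, (S j × E j) ≃ (S j × E j)} {s : ∀ j, S j}
    {n : ∀ j, E j} {s' : ∀ j, S j} {n' : ∀ j, E j} (h : 0 < PF p r π s n s' n') (j : Fin N) :
    0 < finalEnv p r π j (n' j) := by
  have hfwd := forall_apply_eq_of_PF_pos h
  rw [PF, if_pos hfwd] at h
  exact sum_sum_ite_pos (fun s n => mul_nonneg (hp s) (Finset.prod_nonneg fun j _ => hr j (n j)))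
    (by rw [hfwd j]) h

/-- Detailed fluctuation relation for the total classical correlation:
P^F[ξ] e^{-Δι_cl(ξ)} / ∏_j P^F_j[ξ_j] = P^B[ξ] / ∏_j P^B_j[ξ_j] on every trajectory ξ
with P^F[ξ] > 0. -/
theorem stmt9
    (p : (∀ j, S j) → ℝ) (r : ∀ j, E j → ℝ)
    (hp : ∀ s, 0 < p s) (hpsum : ∑ s, p s = 1)
    (hr : ∀ j n, 0 < r j n) (hrsum : ∀ j, ∑ n, r j n = 1)
    (π : ∀ j, (S j × E j) ≃ (S j × E j))
    (s : ∀ j, S j) (n : ∀ j, E j) (s' : ∀ j, S j) (n' : ∀ j, E j)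
    (hpos : 0 < PF p r π s n s' n') :
    PF p r π s n s' n' *
        Real.exp (-(Real.log (p s) - (∑ j, Real.log (marg p j (s j)))
          - (Real.log (finalSys p r π s')
            - ∑ j, Real.log (marg (finalSys p r π) j (s' j))))) /
      (∏ j, PFj p r π j (s j) (n j) (s' j) (n' j))
    = PB p r π s n s' n' / ∏ j, PBj p r π j (s j) (n j) (s' j) (n' j) := by
  have hfwd := forall_apply_eq_of_PF_pos hpos
  have hp₀ : ∀ s, 0 ≤ p s := fun s => (hp s).le
  have hr₀ : ∀ j m, 0 ≤ r j m := fun j m => (hr j m).le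
  have hsys := finalSys_pos_of_PF_pos hp₀ hr₀ hpos
  rw [PF, if_pos hfwd, PB, if_pos fun j => (π j).symm_apply_eq.mpr (hfwd j).symm,
    Finset.prod_congr rfl fun j _ => PFj_of_apply_eq p r hrsum π (hfwd j),
    Finset.prod_congr rfl fun j _ => PBj_of_apply_eq p r hpsum hrsum π (hfwd j)]
  exact mul_exp_neg_log_ratio_div_prod (hp s) hsys (fun j => marg_pos hp₀ (hp s) j)
    (fun j => marg_pos (finalSys_nonneg hp₀ hr₀ π) hsys j) (fun j => (hr j (n j)).ne')
    (fun j => (finalEnv_pos_of_PF_pos hp₀ hr₀ hpos j).ne')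

end Setup
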